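/- Define the polynomial x_poly(u,p) = −(5π/26)·((3u⁴ − 12u² + 10)·p + 8(u² − 1)·p³ + (8/5)·p⁵). Then: (i) x_poly satisfies the Euler–Poisson–Darboux equation u·((x_poly)_uu − (x_poly)_pp) + (x_poly)_u = 0 at every point (u,p) ∈ ℝ²; (ii) the partial derivative with respect to p at u = 1 satisfies (x_poly)_p(1,p) = −(5π/26)·(1 + 8p⁴) < 0 for every p ∈ [−1,1]; and (iii) (x_poly)_p(3/2, 0) = 145π/416 > 0. -/

import Mathlib

/-- Partial derivative with respect to the first variable (here `u`). -/
noncomputable def pd1 (f : ℝ → ℝ → ℝ) (u p : ℝ) : ℝ := deriv (fun u' => f u' p) u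

/-- Partial derivative with respect to the second variable (here `p`). -/
noncomputable def pd2 (f : ℝ → ℝ → ℝ) (u p : ℝ) : ℝ := deriv (fun p' => f u p') p

/-- The exact polynomial solution
`x_poly(u,p) = −(5π/26)·((3u⁴ − 12u² + 10)p + 8(u² − 1)p³ + (8/5)p⁵)`. -/
noncomputable def xpoly (u p : ℝ) : ℝ :=
  -(5 * Real.pi / 26) * ((3 * u ^ 4 - 12 * u ^ 2 + 10) * p
    + 8 * (u ^ 2 - 1) * p ^ 3 + (8 / 5) * p ^ 5)

theorem pd1_eq_of_hasDerivAt {f g : ℝ → ℝ → ℝ}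
    (h : ∀ u p, HasDerivAt (fun u' => f u' p) (g u p) u) : pd1 f = g :=
  funext₂ fun u p => (h u p).deriv

theorem pd2_eq_of_hasDerivAt {f g : ℝ → ℝ → ℝ}
    (h : ∀ u p, HasDerivAt (fun p' => f u p') (g u p) p) : pd2 f = g :=
  funext₂ fun u p => (h u p).deriv

theorem pd1_xpoly : pd1 xpoly = fun u p =>
    -(5 * Real.pi / 26) * ((12 * u ^ 3 - 24 * u) * p + 16 * u * p ^ 3) :=
  pd1_eq_of_hasDerivAt fun u p => by
    have h := (((((hasDerivAt_pow 4 u).const_mul 3).sub ((hasDerivAt_pow 2 u).const_mul 12)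
      ).add_const 10).mul_const p).add
        ((((hasDerivAt_pow 2 u).sub_const 1).const_mul 8).mul_const (p ^ 3))
    exact ((h.add_const (8 / 5 * p ^ 5)).const_mul (-(5 * Real.pi / 26))).congr_deriv
      (by push_cast; ring)

theorem pd2_xpoly : pd2 xpoly = fun u p =>
    -(5 * Real.pi / 26) * ((3 * u ^ 4 - 12 * u ^ 2 + 10) + 24 * (u ^ 2 - 1) * p ^ 2 + 8 * p ^ 4) :=
  pd2_eq_of_hasDerivAt fun u p => by
    have h := (((hasDerivAt_id' p).const_mul (3 * u ^ 4 - 12 * u ^ 2 + 10)).add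
      ((hasDerivAt_pow 3 p).const_mul (8 * (u ^ 2 - 1)))).add
        ((hasDerivAt_pow 5 p).const_mul (8 / 5))
    exact (h.const_mul (-(5 * Real.pi / 26))).congr_deriv (by push_cast; ring)

theorem pd1_pd1_xpoly : pd1 (pd1 xpoly) = fun u p =>
    -(5 * Real.pi / 26) * ((36 * u ^ 2 - 24) * p + 16 * p ^ 3) := by
  rw [pd1_xpoly]
  refine pd1_eq_of_hasDerivAt fun u p => ?_
  have h := ((((hasDerivAt_pow 3 u).const_mul 12).sub ((hasDerivAt_id' u).const_mul 24)
    ).mul_const p).add (((hasDerivAt_id' u).const_mul 16).mul_const (p ^ 3))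
  exact (h.const_mul (-(5 * Real.pi / 26))).congr_deriv (by push_cast; ring)

theorem pd2_pd2_xpoly : pd2 (pd2 xpoly) = fun u p =>
    -(5 * Real.pi / 26) * (48 * (u ^ 2 - 1) * p + 32 * p ^ 3) := by
  rw [pd2_xpoly]
  refine pd2_eq_of_hasDerivAt fun u p => ?_
  have h := (((hasDerivAt_pow 2 p).const_mul (24 * (u ^ 2 - 1))).const_add
    (3 * u ^ 4 - 12 * u ^ 2 + 10)).add ((hasDerivAt_pow 4 p).const_mul 8)
  exact (h.const_mul (-(5 * Real.pi / 26))).congr_deriv (by push_cast; ring)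

/-- (i) `x_poly` satisfies the Euler–Poisson–Darboux equation
`u·(x_uu − x_pp) + x_u = 0` everywhere; (ii) `(x_poly)_p(1,p) = −(5π/26)(1 + 8p⁴) < 0`
for `p ∈ [−1,1]`; (iii) `(x_poly)_p(3/2, 0) = 145π/416 > 0`. -/
theorem fold_singularity_birth :
    (∀ u p : ℝ,
      u * (pd1 (pd1 xpoly) u p - pd2 (pd2 xpoly) u p) + pd1 xpoly u p = 0) ∧
    (∀ p ∈ Set.Icc (-1 : ℝ) 1,
      pd2 xpoly 1 p = -(5 * Real.pi / 26) * (1 + 8 * p ^ 4) ∧ pd2 xpoly 1 p < 0) ∧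
    (pd2 xpoly (3 / 2) 0 = 145 * Real.pi / 416 ∧ 0 < pd2 xpoly (3 / 2) 0) := by
  refine ⟨fun u p => ?_, fun p _ => ?_, ?_⟩
  · rw [pd1_pd1_xpoly, pd2_pd2_xpoly, pd1_xpoly]
    ring
  · have h : pd2 xpoly 1 p = -(5 * Real.pi / 26) * (1 + 8 * p ^ 4) := by
      rw [pd2_xpoly]
      ring
    exact ⟨h, h ▸ mul_neg_of_neg_of_pos (by linarith [Real.pi_pos]) (by positivity)⟩
  · have h : pd2 xpoly (3 / 2) 0 = 145 * Real.pi / 416 := by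
      rw [pd2_xpoly]
      ring
    exact ⟨h, h ▸ by positivity⟩
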